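/- arXiv:2102.00152 — 7 statements merged into one kernel-verified Lean document; each statement's English description precedes it below -/
import Mathlib

section
/- Let μ be a belief on a nonempty finite set S, let A ⊆ S satisfy μ(A) > 0, let δ ∈ [0,1], and define the belief μ_A by μ_A(s) = δ·μ(s) + (1−δ)·B(μ,A)(s). Then for all acts f, g: if ∑_{s∈S} u(f(s))μ(s) ≥ ∑_{s∈S} u(g(s))μ(s) and ∑_{s∈S} u((fAg)(s))μ(s) ≥ ∑_{s∈S} u(g(s))μ(s), then ∑_{s∈S} u(f(s))μ_A(s) ≥ ∑_{s∈S} u(g(s))μ_A(s). Moreover, if both premise inequalities are strict, then the conclusion inequality is strict. (Necessity direction of Theorem 1: a conservative SEU representation satisfies Dynamic Conservatism, including its strict part.) -/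
open Finset

noncomputable def bayes {S : Type*} [DecidableEq S] (μ : S → ℝ) (A : Finset S) : S → ℝ :=
  fun s => if s ∈ A then μ s / ∑ t ∈ A, μ t else 0

def splice {S X : Type*} [DecidableEq S] (f g : S → X) (A : Finset S) : S → X :=
  fun s => if s ∈ A then f s else g s

/-!
Write `E_ν h = ∑ s, u (h s) * ν s`. Expectation is linear in the belief, and integrating against
`B(μ, A)` is integrating over `A` against `μ` and dividing by `μ(A)`; since `f A g` and `g` agree
off `A`, this gives
`E_{μ_A} f - E_{μ_A} g = δ (E_μ f - E_μ g) + (1 - δ) (E_μ (f A g) - E_μ g) / μ(A)`.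
The right-hand side is a convex combination of two quantities that are nonnegative (positive)
under the premises, hence is nonnegative (positive).
-/

section

variable {S X : Type*} [Fintype S] [DecidableEq S]

theorem sum_mul_bayes (φ μ : S → ℝ) (A : Finset S) :
    ∑ s, φ s * bayes μ A s = (∑ s ∈ A, φ s * μ s) / ∑ s ∈ A, μ s := by
  simp only [bayes, mul_ite, mul_zero, sum_ite_mem, univ_inter, sum_div, mul_div_assoc]

theorem sum_mul_mixture_bayes (φ μ μA : S → ℝ) (A : Finset S) (δ : ℝ)
    (hμA : ∀ s, μA s = δ * μ s + (1 - δ) * bayes μ A s) :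
    ∑ s, φ s * μA s = δ * ∑ s, φ s * μ s + (1 - δ) * ((∑ s ∈ A, φ s * μ s) / ∑ s ∈ A, μ s) := by
  simp only [hμA, mul_add, sum_add_distrib, mul_left_comm _ δ, mul_left_comm _ (1 - δ),
    ← mul_sum, sum_mul_bayes]

theorem sum_splice_sub_sum (u : X → ℝ) (μ : S → ℝ) (f g : S → X) (A : Finset S) :
    ∑ s, u (splice f g A s) * μ s - ∑ s, u (g s) * μ s
      = ∑ s ∈ A, u (f s) * μ s - ∑ s ∈ A, u (g s) * μ s := by
  rw [← sum_sub_distrib, ← sum_sub_distrib, ← sum_filter_add_sum_filter_not univ (· ∈ A)]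
  have h_out : ∑ s ∈ univ.filter (· ∉ A), (u (splice f g A s) * μ s - u (g s) * μ s) = 0 :=
    sum_eq_zero fun s hs => by simp [splice, (mem_filter.1 hs).2]
  rw [h_out, add_zero, filter_mem_eq_inter, univ_inter]
  exact sum_congr rfl fun s hs => by simp [splice, hs]

end

theorem stmt0_general {S X : Type*} [Fintype S] [DecidableEq S]
    (μ : S → ℝ)
    (A : Finset S) (hA : 0 < ∑ s ∈ A, μ s)
    (δ : ℝ) (hδ : δ ∈ Set.Icc (0:ℝ) 1)
    (u : X → ℝ)
    (μA : S → ℝ) (hμA : ∀ s, μA s = δ * μ s + (1 - δ) * bayes μ A s)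
    (f g : S → X) :
    ((∑ s, u (f s) * μ s ≥ ∑ s, u (g s) * μ s →
      ∑ s, u (splice f g A s) * μ s ≥ ∑ s, u (g s) * μ s →
      ∑ s, u (f s) * μA s ≥ ∑ s, u (g s) * μA s) ∧
     (∑ s, u (f s) * μ s > ∑ s, u (g s) * μ s →
      ∑ s, u (splice f g A s) * μ s > ∑ s, u (g s) * μ s →
      ∑ s, u (f s) * μA s > ∑ s, u (g s) * μA s)) := by
  have key : ∑ s, u (f s) * μA s - ∑ s, u (g s) * μA s
      = δ * (∑ s, u (f s) * μ s - ∑ s, u (g s) * μ s)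
        + (1 - δ) * ((∑ s, u (splice f g A s) * μ s - ∑ s, u (g s) * μ s) / ∑ s ∈ A, μ s) := by
    rw [sum_mul_mixture_bayes _ _ _ _ _ hμA, sum_mul_mixture_bayes _ _ _ _ _ hμA,
      sum_splice_sub_sum]
    ring
  have hδ' : 0 ≤ 1 - δ := sub_nonneg.2 hδ.2
  constructor
  · intro hfg hsplice
    rw [ge_iff_le, ← sub_nonneg, key]
    exact convex_Ici 0 (sub_nonneg.2 hfg) (div_nonneg (sub_nonneg.2 hsplice) hA.le)
      hδ.1 hδ' (add_sub_cancel δ 1)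
  · intro hfg hsplice
    rw [gt_iff_lt, ← sub_pos, key]
    exact convex_Ioi 0 (sub_pos.2 hfg) (div_pos (sub_pos.2 hsplice) hA)
      hδ.1 hδ' (add_sub_cancel δ 1)

/-- Necessity direction of Theorem 1: a conservative SEU representation satisfies
Dynamic Conservatism, including its strict part. -/
theorem stmt0 {S X : Type*} [Fintype S] [DecidableEq S] [Nonempty S]
    (μ : S → ℝ) (hμ0 : ∀ s, 0 ≤ μ s) (hμ1 : ∑ s, μ s = 1)
    (A : Finset S) (hA : 0 < ∑ s ∈ A, μ s)
    (δ : ℝ) (hδ : δ ∈ Set.Icc (0:ℝ) 1)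
    (u : X → ℝ)
    (μA : S → ℝ) (hμA : ∀ s, μA s = δ * μ s + (1 - δ) * bayes μ A s)
    (f g : S → X) :
    ((∑ s, u (f s) * μ s ≥ ∑ s, u (g s) * μ s →
      ∑ s, u (splice f g A s) * μ s ≥ ∑ s, u (g s) * μ s →
      ∑ s, u (f s) * μA s ≥ ∑ s, u (g s) * μA s) ∧
     (∑ s, u (f s) * μ s > ∑ s, u (g s) * μ s →
      ∑ s, u (splice f g A s) * μ s > ∑ s, u (g s) * μ s →
      ∑ s, u (f s) * μA s > ∑ s, u (g s) * μA s)) :=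
  stmt0_general μ A hA δ hδ u μA hμA f g
end

section
/- Let μ and μ_A be beliefs on a nonempty finite set S, let A ⊆ S satisfy μ(A) > 0, and suppose the interval [−1,1] is contained in the range of u : X → ℝ. Assume the Dynamic Conservatism condition: for all acts f, g, if ∑_{s∈S} u(f(s))μ(s) ≥ ∑_{s∈S} u(g(s))μ(s) and ∑_{s∈S} u((fAg)(s))μ(s) ≥ ∑_{s∈S} u(g(s))μ(s), then ∑_{s∈S} u(f(s))μ_A(s) ≥ ∑_{s∈S} u(g(s))μ_A(s). Then there exists δ ∈ [0,1] such that μ_A(s) = δ·μ(s) + (1−δ)·B(μ,A)(s) for every s ∈ S. (Sufficiency direction of Theorem 1: the posterior is a convex combination of the prior and the Bayesian posterior.) -/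
/-!
Since the range of `u` contains `[-1, 1]`, every utility profile `d : S → ℝ` is, after scaling,
the profile of some act `f`; comparing `f` with a constant act of utility `0` turns Dynamic
Conservatism into a linear condition: `μA` gives `d` nonnegative expectation whenever `μ` gives
both `d` and `d · 1_A` nonnegative expectation. Profiles on which both `μ`-expectations vanish
show that `μA` is proportional to `μ` on `A` and on its complement, and the profile `1_A - μ(A)`
gives `μA(A) ≥ μ(A)`. With `δ = μA(Aᶜ) / μ(Aᶜ)` this is the claimed convex combination.
-/

open Finset

section Realization

variable {S X : Type*} [Fintype S] {u : X → ℝ}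

lemma exists_act_utility_eq_mul (hu : Set.Icc (-1 : ℝ) 1 ⊆ Set.range u) (d : S → ℝ) :
    ∃ c > (0 : ℝ), ∃ f : S → X, ∀ s, u (f s) = c * d s := by
  have hM : 0 ≤ ∑ s, |d s| := sum_nonneg fun s _ => abs_nonneg _
  have hbound (s : S) : (1 + ∑ s, |d s|)⁻¹ * d s ∈ Set.Icc (-1 : ℝ) 1 := by
    have hds : |d s| ≤ ∑ s, |d s| := single_le_sum (fun s _ => abs_nonneg (d s)) (mem_univ s)
    rw [Set.mem_Icc, ← abs_le, abs_mul, abs_inv, abs_of_pos (by positivity),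
      inv_mul_le_iff₀ (by positivity)]
    linarith
  choose f hf using fun s => hu (hbound s)
  exact ⟨_, by positivity, f, hf⟩

lemma sum_utility_splice_const [DecidableEq S] {x₀ : X} (hx₀ : u x₀ = 0)
    (f : S → X) (A : Finset S) (w : S → ℝ) :
    ∑ s, u (splice f (fun _ => x₀) A s) * w s = ∑ s ∈ A, u (f s) * w s := by
  simp [splice, apply_ite u, ite_mul, hx₀]

end Realization

section Conservative

variable {S : Type*} [Fintype S] {μ μA : S → ℝ} {A : Finset S}

/-- Dynamic Conservatism in terms of utility profiles: `μA` must approve every profile `d` that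
`μ` weakly approves both unconditionally and on `A` (the latter is the expected utility of `dAg`
against a constant act `g` of utility `0`). -/
def IsConservativeUpdate (μ μA : S → ℝ) (A : Finset S) : Prop :=
  ∀ d : S → ℝ, 0 ≤ ∑ s, d s * μ s → 0 ≤ ∑ s ∈ A, d s * μ s → 0 ≤ ∑ s, d s * μA s

lemma isConservativeUpdate_of_forall_splice [DecidableEq S] {X : Type*} {u : X → ℝ}
    (hu : Set.Icc (-1 : ℝ) 1 ⊆ Set.range u)
    (hDC : ∀ f g : S → X,
      ∑ s, u (f s) * μ s ≥ ∑ s, u (g s) * μ s →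
      ∑ s, u (splice f g A s) * μ s ≥ ∑ s, u (g s) * μ s →
      ∑ s, u (f s) * μA s ≥ ∑ s, u (g s) * μA s) :
    IsConservativeUpdate μ μA A := by
  intro d hd hdA
  obtain ⟨x₀, hx₀⟩ := hu (show (0 : ℝ) ∈ Set.Icc (-1) 1 by norm_num)
  obtain ⟨c, hc, f, hf⟩ := exists_act_utility_eq_mul hu d
  have hsum (B : Finset S) (w : S → ℝ) : ∑ s ∈ B, u (f s) * w s = c * ∑ s ∈ B, d s * w s := by
    simp only [hf, mul_sum, mul_assoc]
  have hconst (w : S → ℝ) : ∑ s, u ((fun _ => x₀) s) * w s = 0 := by simp [hx₀]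
  have h := hDC f (fun _ => x₀)
    (by rw [hsum, hconst]; positivity)
    (by rw [sum_utility_splice_const hx₀, hsum, hconst]; positivity)
  rw [hsum, hconst] at h
  exact nonneg_of_mul_nonneg_right h hc

namespace IsConservativeUpdate

lemma sum_mul_eq_zero (h : IsConservativeUpdate μ μA A) {d : S → ℝ}
    (hd : ∑ s, d s * μ s = 0) (hdA : ∑ s ∈ A, d s * μ s = 0) : ∑ s, d s * μA s = 0 := by
  have hneg := h (-d) (by simp [hd]) (by simp [hdA])
  simp only [Pi.neg_apply, neg_mul, sum_neg_distrib, neg_nonneg] at hneg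
  exact le_antisymm hneg (h d hd.ge hdA.ge)

lemma mul_sum_eq_mul_sum [DecidableEq S] (h : IsConservativeUpdate μ μA A) {B : Finset S}
    {s : S} (hs : s ∈ B) (hB : B ⊆ A ∨ Disjoint A B) :
    μA s * ∑ t ∈ B, μ t = μ s * ∑ t ∈ B, μA t := by
  set d : S → ℝ := fun t =>
    (∑ t ∈ B, μ t) * (if t = s then 1 else 0) - μ s * (if t ∈ B then 1 else 0)
  have hd (w : S → ℝ) (C : Finset S) : ∑ t ∈ C, d t * w t =
      (∑ t ∈ B, μ t) * (if s ∈ C then w s else 0) - μ s * ∑ t ∈ C ∩ B, w t := by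
    simp [d, sub_mul, sum_sub_distrib, ← mul_sum, ite_mul]
  have hdμA := h.sum_mul_eq_zero (d := d)
    (by simp only [hd, mem_univ, ↓reduceIte, univ_inter]; ring) ?_
  · simp only [hd, mem_univ, ↓reduceIte, univ_inter] at hdμA
    linarith
  · rcases hB with hB | hB
    · simp only [hd, hB hs, ↓reduceIte, inter_eq_right.mpr hB]
      ring
    · simp [hd, disjoint_iff_inter_eq_empty.mp hB, disjoint_right.mp hB hs]

lemma sum_le_sum [DecidableEq S] (h : IsConservativeUpdate μ μA A) (hμ0 : ∀ s, 0 ≤ μ s)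
    (hμ1 : ∑ s, μ s = 1) (hμA1 : ∑ s, μA s = 1) : ∑ s ∈ A, μ s ≤ ∑ s ∈ A, μA s := by
  set p := ∑ s ∈ A, μ s
  have hp0 : 0 ≤ p := sum_nonneg fun s _ => hμ0 s
  have hp1 : p ≤ 1 := hμ1 ▸ sum_le_univ_sum_of_nonneg hμ0
  set d : S → ℝ := fun s => (if s ∈ A then 1 else 0) - p
  have hd (w : S → ℝ) (C : Finset S) :
      ∑ s ∈ C, d s * w s = ∑ s ∈ C ∩ A, w s - p * ∑ s ∈ C, w s := by
    simp [d, sub_mul, sum_sub_distrib, ← mul_sum, ite_mul]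
  have := h d (by simp [hd, hμ1, p]) (by rw [hd, inter_self]; nlinarith)
  simpa [hd, hμA1, sub_nonneg] using this

end IsConservativeUpdate

end Conservative

lemma exists_eq_convex_combination_bayes {S : Type*} [Fintype S] [DecidableEq S]
    {μ μA : S → ℝ} {A : Finset S} (hμ0 : ∀ s, 0 ≤ μ s) (hμ1 : ∑ s, μ s = 1)
    (hμA0 : ∀ s, 0 ≤ μA s) (hμA1 : ∑ s, μA s = 1) (hA : 0 < ∑ s ∈ A, μ s)
    (hin : ∀ s ∈ A, μA s * ∑ t ∈ A, μ t = μ s * ∑ t ∈ A, μA t)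
    (hout : ∀ s ∉ A, μA s * ∑ t ∈ Aᶜ, μ t = μ s * ∑ t ∈ Aᶜ, μA t)
    (hle : ∑ s ∈ A, μ s ≤ ∑ s ∈ A, μA s) :
    ∃ δ ∈ Set.Icc (0 : ℝ) 1, ∀ s, μA s = δ * μ s + (1 - δ) * bayes μ A s := by
  set p := ∑ s ∈ A, μ s with hp
  set q := ∑ s ∈ A, μA s
  have hpc : ∑ s ∈ Aᶜ, μ s = 1 - p := by rw [← hμ1, ← sum_add_sum_compl A μ]; ring
  have hqc : ∑ s ∈ Aᶜ, μA s = 1 - q := by rw [← hμA1, ← sum_add_sum_compl A μA]; ring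
  have hq1 : q ≤ 1 := hμA1 ▸ sum_le_univ_sum_of_nonneg hμA0
  rcases (hle.trans hq1).lt_or_eq with hp1 | hp1
  · refine ⟨(1 - q) / (1 - p), ⟨by apply div_nonneg <;> linarith,
      (div_le_one (by linarith)).mpr (by linarith)⟩, fun s => ?_⟩
    by_cases hs : s ∈ A
    · have hμAs := hin s hs
      have hp0 : p ≠ 0 := hA.ne'
      simp only [bayes, if_pos hs, ← hp]
      field_simp
      linear_combination (1 - p) * hμAs
    · have hμAs := hout s hs
      rw [hpc, hqc] at hμAs
      simp only [bayes, if_neg hs]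
      field_simp
      linarith
  · -- `μ(A) = 1` forces `μA(A) = 1`, so both beliefs vanish off `A` and `μA = μ`.
    refine ⟨1, ⟨zero_le_one, le_rfl⟩, fun s => ?_⟩
    have hq : q = 1 := le_antisymm hq1 (hp1 ▸ hle)
    by_cases hs : s ∈ A
    · simpa [hp1, hq] using hin s hs
    · have hcompl {w : S → ℝ} (hw0 : ∀ s, 0 ≤ w s) (hw : ∑ s ∈ Aᶜ, w s = 0) : w s = 0 :=
        (sum_eq_zero_iff_of_nonneg fun t _ => hw0 t).mp hw s (mem_compl.mpr hs)
      simp [hcompl hμ0 (by rw [hpc, hp1]; ring), hcompl hμA0 (by rw [hqc, hq]; ring)]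

theorem stmt1_general {S X : Type*} [Fintype S] [DecidableEq S]
    (μ μA : S → ℝ)
    (hμ0 : ∀ s, 0 ≤ μ s) (hμ1 : ∑ s, μ s = 1)
    (hμA0 : ∀ s, 0 ≤ μA s) (hμA1 : ∑ s, μA s = 1)
    (A : Finset S) (hA : 0 < ∑ s ∈ A, μ s)
    (u : X → ℝ) (hu : Set.Icc (-1:ℝ) 1 ⊆ Set.range u)
    (hDC : ∀ f g : S → X,
      ∑ s, u (f s) * μ s ≥ ∑ s, u (g s) * μ s →
      ∑ s, u (splice f g A s) * μ s ≥ ∑ s, u (g s) * μ s →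
      ∑ s, u (f s) * μA s ≥ ∑ s, u (g s) * μA s) :
    ∃ δ ∈ Set.Icc (0:ℝ) 1, ∀ s, μA s = δ * μ s + (1 - δ) * bayes μ A s := by
  have h := isConservativeUpdate_of_forall_splice hu hDC
  exact exists_eq_convex_combination_bayes hμ0 hμ1 hμA0 hμA1 hA
    (fun s hs => h.mul_sum_eq_mul_sum hs (.inl subset_rfl))
    (fun s hs => h.mul_sum_eq_mul_sum (mem_compl.mpr hs) (.inr disjoint_compl_right))
    (h.sum_le_sum hμ0 hμ1 hμA1)

/-- Sufficiency direction of Theorem 1: under Dynamic Conservatism the posterior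
is a convex combination of the prior and the Bayesian posterior. -/
theorem stmt1 {S X : Type*} [Fintype S] [DecidableEq S] [Nonempty S]
    (μ μA : S → ℝ)
    (hμ0 : ∀ s, 0 ≤ μ s) (hμ1 : ∑ s, μ s = 1)
    (hμA0 : ∀ s, 0 ≤ μA s) (hμA1 : ∑ s, μA s = 1)
    (A : Finset S) (hA : 0 < ∑ s ∈ A, μ s)
    (u : X → ℝ) (hu : Set.Icc (-1:ℝ) 1 ⊆ Set.range u)
    (hDC : ∀ f g : S → X,
      ∑ s, u (f s) * μ s ≥ ∑ s, u (g s) * μ s →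
      ∑ s, u (splice f g A s) * μ s ≥ ∑ s, u (g s) * μ s →
      ∑ s, u (f s) * μA s ≥ ∑ s, u (g s) * μA s) :
    ∃ δ ∈ Set.Icc (0:ℝ) 1, ∀ s, μA s = δ * μ s + (1 - δ) * bayes μ A s :=
  stmt1_general μ μA hμ0 hμ1 hμA0 hμA1 A hA u hu hDC
end

section
/- Let M be a nonempty set of beliefs on a nonempty finite set S, let u : X → ℝ, let ≿* be the unanimity preference represented by (u, M), and let A ⊆ S satisfy μ(A) > 0 for every μ ∈ M. Let ≿_A be any binary relation on acts, with asymmetric part ≻_A, and assume Dynamic Conservatism: for all acts f, g, (f ≿* g and fAg ≿* g) implies f ≿_A g, and (f ≻* g and fAg ≻* g) implies f ≻_A g, where ≻* is the asymmetric part of ≿*. Then for all consequences x, y ∈ X (viewed as constant acts): x ≿_A y if and only if u(x) ≥ u(y). (Lemma 1: conditional and unconditional preferences agree on constant acts.) -/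
open Finset

/-!
On constant acts every belief in `M` computes the same expected utilities: `u x` for the constant
act `x`, and `u y + (u x - u y) μ(A)` for the spliced act `xAy`. As `μ(A) > 0`, each unanimity
comparison that Dynamic Conservatism refers to therefore reduces to a comparison of `u x` with
`u y`. If `u x ≥ u y` the weak axiom gives `x ≿_A y`; if `u x < u y` the strict axiom gives
`y ≻_A x`, which rules out `x ≿_A y`.
-/

theorem Set.Nonempty.forall_mem_iff {α : Type*} {M : Set α} (hM : M.Nonempty) {P : α → Prop}
    {q : Prop} (hP : ∀ μ ∈ M, P μ ↔ q) : (∀ μ ∈ M, P μ) ↔ q :=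
  ⟨fun h => hM.elim fun μ hμ => (hP μ hμ).1 (h μ hμ), fun hq μ hμ => (hP μ hμ).2 hq⟩

theorem sum_const_mul_of_sum_eq_one {S : Type*} [Fintype S] {μ : S → ℝ} (hμ : ∑ s, μ s = 1)
    (c : ℝ) : ∑ s, c * μ s = c := by
  rw [← mul_sum, hμ, mul_one]

section ConstantActs

variable {S X : Type*} [Fintype S] [DecidableEq S] {μ : S → ℝ} (u : X → ℝ) (x y : X)

theorem sum_splice_const_mul (hμ : ∑ s, μ s = 1) (A : Finset S) :
    ∑ s, u (splice (fun _ => x) (fun _ => y) A s) * μ s = u y + (u x - u y) * ∑ s ∈ A, μ s := by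
  have hpoint : ∀ s, u (splice (fun _ => x) (fun _ => y) A s) * μ s
      = u y * μ s + (if s ∈ A then (u x - u y) * μ s else 0) := by
    intro s
    simp only [splice]
    split <;> ring
  rw [sum_congr rfl fun s _ => hpoint s, sum_add_distrib, sum_const_mul_of_sum_eq_one hμ,
    sum_ite_mem, univ_inter, mul_sum]

variable {u x y} {A : Finset S}

theorem sum_splice_const_mul_ge_iff (hμ : ∑ s, μ s = 1) (hA : 0 < ∑ s ∈ A, μ s) :
    ∑ s, u (splice (fun _ => x) (fun _ => y) A s) * μ s ≥ ∑ s, u y * μ s ↔ u y ≤ u x := by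
  rw [sum_splice_const_mul u x y hμ, sum_const_mul_of_sum_eq_one hμ, ge_iff_le,
    le_add_iff_nonneg_right, mul_nonneg_iff_of_pos_right hA, sub_nonneg]

theorem sum_splice_const_mul_le_iff (hμ : ∑ s, μ s = 1) (hA : 0 < ∑ s ∈ A, μ s) :
    ∑ s, u y * μ s ≥ ∑ s, u (splice (fun _ => x) (fun _ => y) A s) * μ s ↔ u x ≤ u y := by
  rw [sum_splice_const_mul u x y hμ, sum_const_mul_of_sum_eq_one hμ, ge_iff_le,
    add_le_iff_nonpos_right, ← neg_nonneg, ← neg_mul, mul_nonneg_iff_of_pos_right hA, neg_nonneg,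
    sub_nonpos]

end ConstantActs

theorem stmt3_general {S X : Type*} [Fintype S] [DecidableEq S]
    (M : Set (S → ℝ)) (hM : M.Nonempty)
    (hMb : ∀ μ ∈ M, (∀ s, 0 ≤ μ s) ∧ ∑ s, μ s = 1)
    (u : X → ℝ)
    (A : Finset S) (hA : ∀ μ ∈ M, 0 < ∑ s ∈ A, μ s)
    (R : (S → X) → (S → X) → Prop)
    (hDC : ∀ f g : S → X,
      (∀ μ ∈ M, ∑ s, u (f s) * μ s ≥ ∑ s, u (g s) * μ s) →
      (∀ μ ∈ M, ∑ s, u (splice f g A s) * μ s ≥ ∑ s, u (g s) * μ s) →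
      R f g)
    (hDCs : ∀ f g : S → X,
      ((∀ μ ∈ M, ∑ s, u (f s) * μ s ≥ ∑ s, u (g s) * μ s) ∧
        ¬ (∀ μ ∈ M, ∑ s, u (g s) * μ s ≥ ∑ s, u (f s) * μ s)) →
      ((∀ μ ∈ M, ∑ s, u (splice f g A s) * μ s ≥ ∑ s, u (g s) * μ s) ∧
        ¬ (∀ μ ∈ M, ∑ s, u (g s) * μ s ≥ ∑ s, u (splice f g A s) * μ s)) →
      (R f g ∧ ¬ R g f)) :
    ∀ x y : X, R (fun _ => x) (fun _ => y) ↔ u x ≥ u y := by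
  intro x y
  have hconst (a b : X) : (∀ μ ∈ M, ∑ s, u a * μ s ≥ ∑ s, u b * μ s) ↔ u b ≤ u a :=
    hM.forall_mem_iff fun μ hμ => by
      rw [sum_const_mul_of_sum_eq_one (hMb μ hμ).2, sum_const_mul_of_sum_eq_one (hMb μ hμ).2]
  have hspliceGe (a b : X) : (∀ μ ∈ M,
      ∑ s, u (splice (fun _ => a) (fun _ => b) A s) * μ s ≥ ∑ s, u b * μ s) ↔ u b ≤ u a :=
    hM.forall_mem_iff fun μ hμ => sum_splice_const_mul_ge_iff (hMb μ hμ).2 (hA μ hμ)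
  have hspliceLe (a b : X) : (∀ μ ∈ M,
      ∑ s, u b * μ s ≥ ∑ s, u (splice (fun _ => a) (fun _ => b) A s) * μ s) ↔ u a ≤ u b :=
    hM.forall_mem_iff fun μ hμ => sum_splice_const_mul_le_iff (hMb μ hμ).2 (hA μ hμ)
  refine ⟨fun hR => ?_, fun hle => hDC _ _ ((hconst x y).2 hle) ((hspliceGe x y).2 hle)⟩
  by_contra hlt
  push Not at hlt
  exact (hDCs _ _ ⟨(hconst y x).2 hlt.le, fun h => hlt.not_ge ((hconst x y).1 h)⟩
    ⟨(hspliceGe y x).2 hlt.le, fun h => hlt.not_ge ((hspliceLe y x).1 h)⟩).2 hR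

/-- Lemma 1: conditional and unconditional preferences agree on constant acts. -/
theorem stmt3 {S X : Type*} [Fintype S] [DecidableEq S] [Nonempty S]
    (M : Set (S → ℝ)) (hM : M.Nonempty)
    (hMb : ∀ μ ∈ M, (∀ s, 0 ≤ μ s) ∧ ∑ s, μ s = 1)
    (u : X → ℝ)
    (A : Finset S) (hA : ∀ μ ∈ M, 0 < ∑ s ∈ A, μ s)
    (R : (S → X) → (S → X) → Prop)
    (hDC : ∀ f g : S → X,
      (∀ μ ∈ M, ∑ s, u (f s) * μ s ≥ ∑ s, u (g s) * μ s) →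
      (∀ μ ∈ M, ∑ s, u (splice f g A s) * μ s ≥ ∑ s, u (g s) * μ s) →
      R f g)
    (hDCs : ∀ f g : S → X,
      ((∀ μ ∈ M, ∑ s, u (f s) * μ s ≥ ∑ s, u (g s) * μ s) ∧
        ¬ (∀ μ ∈ M, ∑ s, u (g s) * μ s ≥ ∑ s, u (f s) * μ s)) →
      ((∀ μ ∈ M, ∑ s, u (splice f g A s) * μ s ≥ ∑ s, u (g s) * μ s) ∧
        ¬ (∀ μ ∈ M, ∑ s, u (g s) * μ s ≥ ∑ s, u (splice f g A s) * μ s)) →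
      (R f g ∧ ¬ R g f)) :
    ∀ x y : X, R (fun _ => x) (fun _ => y) ↔ u x ≥ u y :=
  stmt3_general M hM hMb u A hA R hDC hDCs
end

section
/- Let M be a nonempty set of beliefs on a nonempty finite set S, let u : X → ℝ, and let ≿* be the unanimity preference represented by (u, M). Then for every event A ⊆ S and all acts f, g: fAg ≿* g if and only if fAh ≿* gAh for every act h. (Lemma 2.) -/
open Finset

/-! For each belief `μ`, the difference of expected utilities of `fAh` and `gAh` is
`∑ s ∈ A, (u (f s) - u (g s)) * μ s`, which does not involve `h`; the act `g` itself is `gAg`. -/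

section Splice

variable {S X R : Type*} [Fintype S] [DecidableEq S]

omit [Fintype S] in
@[simp]
theorem splice_self (g : S → X) (A : Finset S) : splice g g A = g := by
  funext s
  simp [splice]

theorem sum_splice_sub_sum_splice [CommRing R] (u : X → R) (μ : S → R) (f g h : S → X)
    (A : Finset S) :
    ∑ s, u (splice f h A s) * μ s - ∑ s, u (splice g h A s) * μ s
      = ∑ s ∈ A, (u (f s) - u (g s)) * μ s := by
  calc _ = ∑ s, if s ∈ A then (u (f s) - u (g s)) * μ s else 0 := by
        rw [← sum_sub_distrib]
        refine sum_congr rfl fun s _ => ?_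
        unfold splice
        split_ifs <;> ring
    _ = _ := by rw [sum_ite_mem, univ_inter]

theorem sum_splice_le_sum_splice_iff [CommRing R] [PartialOrder R] [IsOrderedAddMonoid R]
    (u : X → R) (μ : S → R) (f g h h' : S → X) (A : Finset S) :
    ∑ s, u (splice g h A s) * μ s ≤ ∑ s, u (splice f h A s) * μ s ↔
      ∑ s, u (splice g h' A s) * μ s ≤ ∑ s, u (splice f h' A s) * μ s := by
  rw [← sub_nonneg, sum_splice_sub_sum_splice, ← sub_nonneg (a := ∑ s, _ * μ s),
    sum_splice_sub_sum_splice]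

end Splice

theorem stmt4_general {S X : Type*} [Fintype S] [DecidableEq S]
    (M : Set (S → ℝ))
    (u : X → ℝ)
    (A : Finset S) (f g : S → X) :
    (∀ μ ∈ M, ∑ s, u (splice f g A s) * μ s ≥ ∑ s, u (g s) * μ s) ↔
    (∀ h : S → X, ∀ μ ∈ M,
      ∑ s, u (splice f h A s) * μ s ≥ ∑ s, u (splice g h A s) * μ s) := by
  conv_lhs => enter [μ, hμ, 2, 2, s]; rw [← splice_self g A]
  exact ⟨fun H h μ hμ => (sum_splice_le_sum_splice_iff u μ f g g h A).1 (H μ hμ),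
    fun H μ hμ => H g μ hμ⟩

/-- Lemma 2: fAg ≿* g iff fAh ≿* gAh for every act h. -/
theorem stmt4 {S X : Type*} [Fintype S] [DecidableEq S] [Nonempty S]
    (M : Set (S → ℝ)) (hM : M.Nonempty)
    (hMb : ∀ μ ∈ M, (∀ s, 0 ≤ μ s) ∧ ∑ s, μ s = 1)
    (u : X → ℝ)
    (A : Finset S) (f g : S → X) :
    (∀ μ ∈ M, ∑ s, u (splice f g A s) * μ s ≥ ∑ s, u (g s) * μ s) ↔
    (∀ h : S → X, ∀ μ ∈ M,
      ∑ s, u (splice f h A s) * μ s ≥ ∑ s, u (splice g h A s) * μ s) :=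
  stmt4_general M u A f g
end

section
/- Let S be a finite set with at least 3 elements, let μ be a belief on S with full support (μ(s) > 0 for every s ∈ S), let u : X → ℝ with [−1,1] contained in the range of u, let δ assign to each nonempty event A ⊆ S a value δ(A) ∈ [0,1], and set μ_A = δ(A)·μ + (1−δ(A))·B(μ,A). Assume Weak Consequentialism: for all nonempty events A, B, C with C ∩ (A ∪ B) = ∅, every act f, and all y, z ∈ X, ∑_{s∈S} u((fCy)(s))μ_A(s) ≥ u(z) if and only if ∑_{s∈S} u((fCy)(s))μ_B(s) ≥ u(z). Then there is a single δ* ∈ [0,1] such that δ(A) = δ* for every event A with ∅ ≠ A ≠ S. (Direction (i)⇒(ii) of Proposition 1.) -/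
/-!
Bet one util on a state `c` lying outside both `A` and `B`. Since `c ∉ A`, the Bayesian part of
`μ_A` puts no mass on `c`, so the bet is worth `δ(A) μ(c)` under `μ_A`, and likewise
`δ(B) μ(c)` under `μ_B`. Both values lie in `[0, 1] ⊆ range u`, so Weak Consequentialism, tested
against consequences of exactly these utilities, forces them to be equal; as `μ(c) > 0`,
`δ(A) = δ(B)` whenever `A ∪ B ≠ S`. With at least three states, every proper event is linked in
this way to one of its singletons, and any two singletons to each other.
-/

open Finset

noncomputable def conservativeUpdate {S : Type*} [DecidableEq S] (δ : Finset S → ℝ)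
    (μ : S → ℝ) (A : Finset S) (s : S) : ℝ :=
  δ A * μ s + (1 - δ A) * bayes μ A s

def WeakConsequentialism {S X : Type*} [Fintype S] [DecidableEq S] (u : X → ℝ) (μ : S → ℝ)
    (δ : Finset S → ℝ) : Prop :=
  ∀ A B C : Finset S, A.Nonempty → B.Nonempty → C.Nonempty → C ∩ (A ∪ B) = ∅ →
    ∀ f : S → X, ∀ y z : X,
      (∑ s, u (splice f (fun _ => y) C s) * conservativeUpdate δ μ A s ≥ u z) ↔
      (∑ s, u (splice f (fun _ => y) C s) * conservativeUpdate δ μ B s ≥ u z)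

lemma bayes_of_notMem {S : Type*} [DecidableEq S] (μ : S → ℝ) {A : Finset S} {s : S}
    (hs : s ∉ A) : bayes μ A s = 0 :=
  if_neg hs

lemma sum_splice_singleton_mul {S X : Type*} [Fintype S] [DecidableEq S] (v : X → ℝ)
    {x y : X} (hy : v y = 0) (c : S) (w : S → ℝ) :
    ∑ s, v (splice (fun _ => x) (fun _ => y) {c} s) * w s = v x * w c := by
  simp [splice, apply_ite v, hy, ite_mul]

lemma eq_of_forall_le_iff_of_mem_range {X : Type*} {u : X → ℝ} {a b : ℝ}
    (ha : a ∈ Set.range u) (hb : b ∈ Set.range u) (h : ∀ z, u z ≤ a ↔ u z ≤ b) : a = b := by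
  obtain ⟨za, rfl⟩ := ha
  obtain ⟨zb, rfl⟩ := hb
  exact le_antisymm ((h za).mp le_rfl) ((h zb).mpr le_rfl)

lemma WeakConsequentialism.eq_of_union_ne_univ {S X : Type*} [Fintype S] [DecidableEq S]
    {u : X → ℝ} {μ : S → ℝ} {δ : Finset S → ℝ} (hWC : WeakConsequentialism u μ δ)
    (hμ0 : ∀ s, 0 < μ s) (hμ1 : ∑ s, μ s = 1) (hu : Set.Icc (-1 : ℝ) 1 ⊆ Set.range u)
    (hδ : ∀ A : Finset S, A.Nonempty → δ A ∈ Set.Icc (0 : ℝ) 1)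
    {A B : Finset S} (hA : A.Nonempty) (hB : B.Nonempty) (hAB : A ∪ B ≠ univ) :
    δ A = δ B := by
  obtain ⟨c, hc⟩ : ∃ c, c ∉ A ∪ B := by simpa [eq_univ_iff_forall] using hAB
  obtain ⟨x₁, hx₁⟩ := hu ⟨by norm_num, le_rfl⟩
  obtain ⟨x₀, hx₀⟩ := hu ⟨by norm_num, zero_le_one⟩
  have hbet : ∀ D, c ∉ D →
      ∑ s, u (splice (fun _ => x₁) (fun _ => x₀) {c} s) * conservativeUpdate δ μ D s
        = δ D * μ c := by
    intro D hcD
    rw [sum_splice_singleton_mul u hx₀, hx₁, conservativeUpdate, bayes_of_notMem μ hcD]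
    ring
  have hμc : μ c ≤ 1 := hμ1 ▸ single_le_sum (fun s _ => (hμ0 s).le) (mem_univ c)
  have hrange : ∀ D : Finset S, D.Nonempty → δ D * μ c ∈ Set.range u := fun D hD =>
    have hδD := hδ D hD
    hu ⟨by nlinarith [hμ0 c, hδD.1], mul_le_one₀ hδD.2 (hμ0 c).le hμc⟩
  refine mul_right_cancel₀ (hμ0 c).ne' <| eq_of_forall_le_iff_of_mem_range
    (hrange A hA) (hrange B hB) fun z => ?_
  have h := hWC A B {c} hA hB (singleton_nonempty c) (singleton_inter_of_notMem hc)
    (fun _ => x₁) x₀ z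
  rwa [hbet A (notMem_union.mp hc).1, hbet B (notMem_union.mp hc).2] at h

lemma eq_singleton_of_forall_union_ne_univ {S β : Type*} [Fintype S] [DecidableEq S]
    (hcard : 3 ≤ Fintype.card S) {δ : Finset S → β}
    (h : ∀ A B : Finset S, A.Nonempty → B.Nonempty → A ∪ B ≠ univ → δ A = δ B)
    (s₀ : S) {A : Finset S} (hA : A.Nonempty) (hAu : A ≠ univ) : δ A = δ {s₀} := by
  obtain ⟨a, ha⟩ := hA
  have hAa : δ A = δ {a} :=
    h _ _ ⟨a, ha⟩ (singleton_nonempty a) (by rwa [union_eq_left.mpr (singleton_subset_iff.mpr ha)])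
  have ha₀ : δ {a} = δ {s₀} := by
    refine h _ _ (singleton_nonempty a) (singleton_nonempty s₀) fun hu => ?_
    have := (card_union_le {a} {s₀}).trans_eq' (congrArg card hu)
    simp only [card_univ, card_singleton] at this
    omega
  rw [hAa, ha₀]

/-- Direction (i) ⇒ (ii) of Proposition 1: Weak Consequentialism implies a
constant degree of conservatism. -/
theorem stmt9 {S X : Type*} [Fintype S] [DecidableEq S]
    (hcard : 3 ≤ Fintype.card S)
    (μ : S → ℝ) (hμ0 : ∀ s, 0 < μ s) (hμ1 : ∑ s, μ s = 1)
    (u : X → ℝ) (hu : Set.Icc (-1:ℝ) 1 ⊆ Set.range u)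
    (δ : Finset S → ℝ) (hδ : ∀ A : Finset S, A.Nonempty → δ A ∈ Set.Icc (0:ℝ) 1)
    (hWC : ∀ A B C : Finset S, A.Nonempty → B.Nonempty → C.Nonempty →
      C ∩ (A ∪ B) = ∅ →
      ∀ f : S → X, ∀ y z : X,
        ((∑ s, u (splice f (fun _ => y) C s) *
            (δ A * μ s + (1 - δ A) * bayes μ A s) ≥ u z) ↔
         (∑ s, u (splice f (fun _ => y) C s) *
            (δ B * μ s + (1 - δ B) * bayes μ B s) ≥ u z))) :
    ∃ d ∈ Set.Icc (0:ℝ) 1,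
      ∀ A : Finset S, A.Nonempty → A ≠ Finset.univ → δ A = d := by
  obtain ⟨s₀⟩ : Nonempty S := Fintype.card_pos_iff.mp (by omega)
  exact ⟨δ {s₀}, hδ {s₀} (singleton_nonempty s₀), fun A hA hAu =>
    eq_singleton_of_forall_union_ne_univ hcard
      (fun _ _ hA hB hAB =>
        WeakConsequentialism.eq_of_union_ne_univ hWC hμ0 hμ1 hu hδ hA hB hAB) s₀ hA hAu⟩
end

section
/- Let M and M_A be nonempty sets of beliefs on a nonempty finite set S, let u : X → ℝ, and let A ⊆ S satisfy μ(A) > 0 for every μ ∈ M. Suppose every π ∈ M_A lies in the convex hull of M ∪ B(M,A), where B(M,A) = {B(μ,A) : μ ∈ M}. Then for all acts f, g: if ∑_{s∈S} u(f(s))μ(s) ≥ ∑_{s∈S} u(g(s))μ(s) for every μ ∈ M, and ∑_{s∈S} u((fAg)(s))μ(s) ≥ ∑_{s∈S} u(g(s))μ(s) for every μ ∈ M, then ∑_{s∈S} u(f(s))π(s) ≥ ∑_{s∈S} u(g(s))π(s) for every π ∈ M_A. (Necessity direction of Theorem 2: a conservative multi-prior representation satisfies Unambiguous Dynamic Conservatism.)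 -/
/-!
The expected-utility difference `π ↦ ∑ s, (u (f s) - u (g s)) * π s` is linear, so its
nonnegativity set is a convex half-space. It contains `M` by the first hypothesis, and it
contains every Bayesian update `B(μ, A)` because the difference evaluated at `B(μ, A)` is the
difference between `fAg` and `g` evaluated at `μ`, divided by `μ(A) > 0`. Hence it contains the
convex hull of `M ∪ B(M, A)`, and with it `M_A`.
-/

open Finset

theorem dotProduct_nonneg_of_mem_convexHull {S : Type*} [Fintype S] (w : S → ℝ)
    {T : Set (S → ℝ)} (hT : ∀ x ∈ T, 0 ≤ w ⬝ᵥ x) {x : S → ℝ} (hx : x ∈ convexHull ℝ T) :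
    0 ≤ w ⬝ᵥ x :=
  convexHull_min hT (convex_halfSpace_ge ⟨dotProduct_add w, fun c y => dotProduct_smul c w y⟩ 0) hx

theorem dotProduct_bayes {S : Type*} [Fintype S] [DecidableEq S] (w μ : S → ℝ) (A : Finset S) :
    w ⬝ᵥ bayes μ A = (∑ s ∈ A, w s * μ s) / ∑ s ∈ A, μ s := by
  simp only [dotProduct, bayes, mul_ite, mul_zero, sum_ite_mem, univ_inter, sum_div, mul_div_assoc]

theorem sum_splice_mul_sub {S X : Type*} [Fintype S] [DecidableEq S] (u : X → ℝ) (f g : S → X)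
    (A : Finset S) (μ : S → ℝ) :
    ∑ s, u (splice f g A s) * μ s - ∑ s, u (g s) * μ s = ∑ s ∈ A, (u (f s) - u (g s)) * μ s := by
  rw [← sum_sub_distrib, ← sum_add_sum_compl A,
    sum_eq_zero (s := Aᶜ) fun s hs => by simp [splice, mem_compl.mp hs], add_zero]
  exact sum_congr rfl fun s hs => by simp [splice, hs, sub_mul]

theorem stmt13_general {S X : Type*} [Fintype S] [DecidableEq S]
    (M MA : Set (S → ℝ))
    (u : X → ℝ)
    (A : Finset S) (hA : ∀ μ ∈ M, 0 < ∑ s ∈ A, μ s)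
    (hsub : ∀ π ∈ MA, π ∈ convexHull ℝ (M ∪ (fun μ => bayes μ A) '' M)) :
    ∀ f g : S → X,
      (∀ μ ∈ M, ∑ s, u (f s) * μ s ≥ ∑ s, u (g s) * μ s) →
      (∀ μ ∈ M, ∑ s, u (splice f g A s) * μ s ≥ ∑ s, u (g s) * μ s) →
      ∀ π ∈ MA, ∑ s, u (f s) * π s ≥ ∑ s, u (g s) * π s := by
  intro f g hf hfAg π hπ
  set w : S → ℝ := fun s => u (f s) - u (g s)
  have hw : ∀ x, w ⬝ᵥ x = ∑ s, u (f s) * x s - ∑ s, u (g s) * x s := fun x => by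
    simp only [dotProduct, w, sub_mul, sum_sub_distrib]
  have hT : ∀ x ∈ M ∪ (fun μ => bayes μ A) '' M, 0 ≤ w ⬝ᵥ x := by
    rintro x (hx | ⟨μ, hμ, rfl⟩)
    · linarith [hw x, hf x hx]
    · rw [dotProduct_bayes]
      refine div_nonneg ?_ (hA μ hμ).le
      linarith [sum_splice_mul_sub u f g A μ, hfAg μ hμ]
  linarith [hw π, dotProduct_nonneg_of_mem_convexHull w hT (hsub π hπ)]

/-- Necessity direction of Theorem 2: a conservative multi-prior representation
satisfies Unambiguous Dynamic Conservatism. -/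
theorem stmt13 {S X : Type*} [Fintype S] [DecidableEq S] [Nonempty S]
    (M MA : Set (S → ℝ)) (hM : M.Nonempty) (hMA : MA.Nonempty)
    (hMb : ∀ μ ∈ M, (∀ s, 0 ≤ μ s) ∧ ∑ s, μ s = 1)
    (hMAb : ∀ π ∈ MA, (∀ s, 0 ≤ π s) ∧ ∑ s, π s = 1)
    (u : X → ℝ)
    (A : Finset S) (hA : ∀ μ ∈ M, 0 < ∑ s ∈ A, μ s)
    (hsub : ∀ π ∈ MA, π ∈ convexHull ℝ (M ∪ (fun μ => bayes μ A) '' M)) :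
    ∀ f g : S → X,
      (∀ μ ∈ M, ∑ s, u (f s) * μ s ≥ ∑ s, u (g s) * μ s) →
      (∀ μ ∈ M, ∑ s, u (splice f g A s) * μ s ≥ ∑ s, u (g s) * μ s) →
      ∀ π ∈ MA, ∑ s, u (f s) * π s ≥ ∑ s, u (g s) * π s :=
  stmt13_general M MA u A hA hsub
end

section
/- Let μ and μ_A be beliefs on a nonempty finite set S, let u : X → ℝ with [−1,1] contained in the range of u, and let A ⊆ S satisfy μ(A) = 0 (A is a null event, so that ∑_{s∈S} u((fAg)(s))μ(s) = ∑_{s∈S} u(g(s))μ(s) for all acts f, g). Assume that for all acts f, g: ∑_{s∈S} u(f(s))μ(s) ≥ ∑_{s∈S} u(g(s))μ(s) implies ∑_{s∈S} u(f(s))μ_A(s) ≥ ∑_{s∈S} u(g(s))μ_A(s). Then μ_A = μ. (Claim of footnote 5: a conservative agent reacts to a null event by completely ignoring it, i.e., Dynamic Conservatism at a null event forces the conditional belief to equal the prior.) -/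
/-!
Under a belief, an act whose utility profile `v` takes values in a convex set `C` has expected
utility `c` in `C` as well, so when `C ⊆ range u` the act is indifferent, under the prior, to a
constant act worth `c`. Dynamic Conservatism preserves that indifference, and the constant act is
worth `c` under every belief, so the two beliefs give every such profile the same expectation.
Applied to the indicator of a single state this yields `μA s = μ s`.
-/

open Finset

section

variable {S X : Type*} [Fintype S] {μ μA : S → ℝ} {u : X → ℝ}

theorem sum_mul_mem_of_convex {C : Set ℝ} (hC : Convex ℝ C)
    (hμ0 : ∀ s, 0 ≤ μ s) (hμ1 : ∑ s, μ s = 1) {v : S → ℝ} (hv : ∀ s, v s ∈ C) :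
    ∑ s, v s * μ s ∈ C := by
  simpa only [smul_eq_mul, mul_comm] using
    hC.sum_mem (fun s _ => hμ0 s) hμ1 (fun s _ => hv s)

theorem sum_mul_eq_of_sum_mul_eq
    (hDC : ∀ f g : S → X,
      ∑ s, u (f s) * μ s ≥ ∑ s, u (g s) * μ s →
      ∑ s, u (f s) * μA s ≥ ∑ s, u (g s) * μA s)
    {f g : S → X} (h : ∑ s, u (f s) * μ s = ∑ s, u (g s) * μ s) :
    ∑ s, u (f s) * μA s = ∑ s, u (g s) * μA s :=
  le_antisymm (hDC g f h.le) (hDC f g h.ge)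

theorem sum_mul_eq_of_preserves_preference {C : Set ℝ} (hC : Convex ℝ C)
    (hμ0 : ∀ s, 0 ≤ μ s) (hμ1 : ∑ s, μ s = 1) (hμA1 : ∑ s, μA s = 1)
    (hu : C ⊆ Set.range u)
    (hDC : ∀ f g : S → X,
      ∑ s, u (f s) * μ s ≥ ∑ s, u (g s) * μ s →
      ∑ s, u (f s) * μA s ≥ ∑ s, u (g s) * μA s)
    {v : S → ℝ} (hv : ∀ s, v s ∈ C) :
    ∑ s, v s * μA s = ∑ s, v s * μ s := by
  choose f hf using fun s => hu (hv s)
  obtain ⟨y, hy⟩ := hu (sum_mul_mem_of_convex hC hμ0 hμ1 hv)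
  have h_const : ∀ p : S → ℝ, ∑ s, p s = 1 → ∑ s, u y * p s = ∑ s, v s * μ s :=
    fun p hp => by rw [← mul_sum, hp, mul_one, hy]
  have h_indiff := sum_mul_eq_of_sum_mul_eq hDC (f := f) (g := fun _ => y)
    (by simp only [hf, h_const μ hμ1])
  simpa only [hf, h_const μA hμA1] using h_indiff

end

theorem stmt16_general {S X : Type*} [Fintype S] [DecidableEq S]
    (μ μA : S → ℝ)
    (hμ0 : ∀ s, 0 ≤ μ s) (hμ1 : ∑ s, μ s = 1)
    (hμA1 : ∑ s, μA s = 1)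
    (u : X → ℝ) (hu : Set.Icc (-1:ℝ) 1 ⊆ Set.range u)
    (hDC : ∀ f g : S → X,
      ∑ s, u (f s) * μ s ≥ ∑ s, u (g s) * μ s →
      ∑ s, u (f s) * μA s ≥ ∑ s, u (g s) * μA s) :
    μA = μ := by
  funext s
  have h_single : ∀ t, (Pi.single s 1 : S → ℝ) t ∈ Set.Icc (-1 : ℝ) 1 := by
    intro t
    rcases eq_or_ne t s with rfl | hts <;> simp [*]
  simpa [Pi.single_apply] using
    sum_mul_eq_of_preserves_preference (convex_Icc _ _) hμ0 hμ1 hμA1 hu hDC h_single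

/-- Footnote 5: Dynamic Conservatism at a null event forces the conditional
belief to equal the prior. -/
theorem stmt16 {S X : Type*} [Fintype S] [DecidableEq S] [Nonempty S]
    (μ μA : S → ℝ)
    (hμ0 : ∀ s, 0 ≤ μ s) (hμ1 : ∑ s, μ s = 1)
    (hμA0 : ∀ s, 0 ≤ μA s) (hμA1 : ∑ s, μA s = 1)
    (u : X → ℝ) (hu : Set.Icc (-1:ℝ) 1 ⊆ Set.range u)
    (A : Finset S) (hA : ∑ s ∈ A, μ s = 0)
    (hDC : ∀ f g : S → X,
      ∑ s, u (f s) * μ s ≥ ∑ s, u (g s) * μ s →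
      ∑ s, u (f s) * μA s ≥ ∑ s, u (g s) * μA s) :
    μA = μ :=
  stmt16_general μ μA hμ0 hμ1 hμA1 u hu hDC
end
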